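/- arXiv:2004.12149 — 6 statements merged into one kernel-verified Lean document; each statement's English description precedes it below -/
import Mathlib

section
/- Let z ∈ ℂ with Im z > 0 and |z-1|² = |z|. Define the face-pairing maps z₁(u) = (conj(u) - 1)/(conj(z) - 1) and z₂(u) = conj(u)·z/(conj(u) - conj(z)·(1-z)) on ℂ. Then for every u ∈ ℂ for which all occurring denominators are nonzero, z₂(z₂(z₁(z₁(u)))) = z₁(z₂(u)); that is, the face-pairing maps satisfy the Gieseking cycle relation z₁z₁z₂z₂z₁⁻¹z₂⁻¹ = 1. -/
open Complex

/-- The face-pairing map `z₁` of the ideal simplex with vertices `0, 1, z, ∞`. -/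
noncomputable def gieseking_z1 (z u : ℂ) : ℂ :=
  ((starRingEnd ℂ) u - 1) / ((starRingEnd ℂ) z - 1)

/-- The face-pairing map `z₂` of the ideal simplex with vertices `0, 1, z, ∞`. -/
noncomputable def gieseking_z2 (z u : ℂ) : ℂ :=
  (starRingEnd ℂ) u * z / ((starRingEnd ℂ) u - (starRingEnd ℂ) z * (1 - z))

/-!
`z₁ ∘ z₁` is the holomorphic map `u ↦ (u - z) / |z - 1|²`, and the Gieseking equation says
`|z - 1|² = |z|`, whose square is `z z̄`. Substituting these two facts, the denominator of
`z₂ z₂ z₁ z₁ u` factors as `z z̄ (u - z (1 - z̄))` and its numerator as `z z̄ (u - z)`, leaving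
exactly `z₁ z₂ u = (u - z) / (u - z (1 - z̄))`.
-/

open ComplexConjugate

namespace Gieseking

theorem z1_z1 {z : ℂ} (hz : conj z - 1 ≠ 0) (u : ℂ) :
    gieseking_z1 z (gieseking_z1 z u) = (u - z) / ((z - 1) * (conj z - 1)) := by
  have hz' : z - 1 ≠ 0 := fun h => hz (by rw [sub_eq_zero.mp h, map_one, sub_self])
  simp only [gieseking_z1, map_div₀, map_sub, map_one, conj_conj]
  field_simp
  ring

theorem z2_div (z : ℂ) {a b : ℂ} (hb : b ≠ 0) :
    gieseking_z2 z (a / b) = conj a * z / (conj a - conj z * (1 - z) * conj b) := by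
  have hb' : conj b ≠ 0 := (map_ne_zero _).mpr hb
  rw [gieseking_z2, map_div₀, div_sub' hb', div_mul_eq_mul_div, div_div_div_cancel_right₀ hb',
    mul_comm (conj b)]

theorem z1_z2 {z u : ℂ} (hz : conj z - 1 ≠ 0) (hu : conj u - conj z * (1 - z) ≠ 0) :
    gieseking_z1 z (gieseking_z2 z u) = (u - z) / (u - z * (1 - conj z)) := by
  have hu' : u - z * (1 - conj z) ≠ 0 := by simpa using (map_ne_zero conj).mpr hu
  simp only [gieseking_z1, gieseking_z2, map_div₀, map_sub, map_mul, map_one, conj_conj]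
  field_simp
  ring

theorem sub_one_mul_conj_sub_one {z : ℂ} (hz : ‖z - 1‖ ^ 2 = ‖z‖) :
    (z - 1) * (conj z - 1) = ‖z‖ := by
  have h := mul_conj' (z - 1)
  rw [map_sub, map_one] at h
  rw [h, ← ofReal_pow, hz]

end Gieseking

open Gieseking

theorem gieseking_cycle_relation_general (z : ℂ)
    (hz : ‖z - 1‖ ^ 2 = ‖z‖) :
    ∀ u : ℂ,
      (starRingEnd ℂ) z - 1 ≠ 0 →
      (starRingEnd ℂ) u - (starRingEnd ℂ) z * (1 - z) ≠ 0 →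
      (starRingEnd ℂ) (gieseking_z1 z (gieseking_z1 z u)) -
        (starRingEnd ℂ) z * (1 - z) ≠ 0 →
      (starRingEnd ℂ) (gieseking_z2 z (gieseking_z1 z (gieseking_z1 z u))) -
        (starRingEnd ℂ) z * (1 - z) ≠ 0 →
      gieseking_z2 z (gieseking_z2 z (gieseking_z1 z (gieseking_z1 z u))) =
        gieseking_z1 z (gieseking_z2 z u) := by
  intro u hz1 hu h11 _
  set r : ℂ := (‖z‖ : ℂ)
  have hz0 : z ≠ 0 := by rintro rfl; norm_num at hz
  have hr_conj : conj r = r := conj_ofReal _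
  have hr0 : r ≠ 0 := ofReal_ne_zero.mpr (norm_ne_zero_iff.mpr hz0)
  have hr : (z - 1) * (conj z - 1) = r := sub_one_mul_conj_sub_one hz
  have hr_sq : z * conj z = r ^ 2 := mul_conj' z
  have hz1z1 : gieseking_z1 z (gieseking_z1 z u) = (u - z) / r := by rw [z1_z1 hz1, hr]
  have hden : conj (u - z) - conj z * (1 - z) * r ≠ 0 := by
    rw [hz1z1, map_div₀, hr_conj, div_sub' hr0] at h11
    rw [mul_comm]
    exact (div_ne_zero_iff.mp h11).1
  have hzz : z * conj z ≠ 0 := mul_ne_zero hz0 ((map_ne_zero conj).mpr hz0)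
  rw [hz1z1, z2_div z hr0, hr_conj, z2_div z hden, z1_z2 hz1 hu]
  simp only [map_mul, map_sub, map_one, conj_conj, hr_conj]
  calc (u - z) * conj z * z / ((u - z) * conj z - conj z * (1 - z) * (u - z - z * (1 - conj z) * r))
      = (u - z) * (z * conj z) / ((u - z * (1 - conj z)) * (z * conj z)) := by
        congr 1
        · ring
        · linear_combination (-(z * conj z)) * hr_sq + z * conj z * r * hr
    _ = (u - z) / (u - z * (1 - conj z)) := mul_div_mul_right _ _ hzz

/-- The Gieseking cycle relation `z₁z₁z₂z₂z₁⁻¹z₂⁻¹ = 1`, i.e.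
`z₂(z₂(z₁(z₁(u)))) = z₁(z₂(u))` wherever all occurring denominators are nonzero. -/
theorem gieseking_cycle_relation (z : ℂ) (hIm : 0 < z.im)
    (hz : ‖z - 1‖ ^ 2 = ‖z‖) :
    ∀ u : ℂ,
      (starRingEnd ℂ) z - 1 ≠ 0 →
      (starRingEnd ℂ) u - (starRingEnd ℂ) z * (1 - z) ≠ 0 →
      (starRingEnd ℂ) (gieseking_z1 z (gieseking_z1 z u)) -
        (starRingEnd ℂ) z * (1 - z) ≠ 0 →
      (starRingEnd ℂ) (gieseking_z2 z (gieseking_z1 z (gieseking_z1 z u))) -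
        (starRingEnd ℂ) z * (1 - z) ≠ 0 →
      gieseking_z2 z (gieseking_z2 z (gieseking_z1 z (gieseking_z1 z u))) =
        gieseking_z1 z (gieseking_z2 z u) :=
  gieseking_cycle_relation_general z hz
end

section
/- For every integer k ≥ 2, let z = 1 + (1/2)·exp(iπ/k)·(1 + (1 + 4·exp(-iπ/k))^(1/2)) (the Gies.1 root) and z' = 1 + (1/2)·exp(-iπ/k)·(1 - (1 + 4·exp(iπ/k))^(1/2)) (the Gies.2 root). Then z'·conj(z) = 1, i.e. z' = 1/conj(z). -/
open Complex Real

lemma aux_re_pos (t : ℝ) (h : 0 ≤ Real.cos t) :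
    0 < (1 + 4 * Complex.exp ((t : ℂ) * Complex.I)).re := by
  have hre : (Complex.exp ((t : ℂ) * Complex.I)).re = Real.cos t :=
    Complex.exp_ofReal_mul_I_re t
  simp only [Complex.add_re, Complex.one_re, Complex.mul_re]
  have h4re : (4 : ℂ).re = 4 := rfl
  have h4im : (4 : ℂ).im = 0 := rfl
  rw [h4re, h4im, hre]
  linarith

/-- The Gies.1 root (2.10) and the Gies.2 root (3.1) are related by the half-turn
symmetry of the ideal simplex: `z'·conj(z) = 1`, i.e. `z' = 1/conj(z)`. -/
theorem gies1_gies2_half_turn (k : ℤ) (hk : 2 ≤ k) :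
    ∀ z z' : ℂ,
      z = 1 + (1 / 2) * Complex.exp (Real.pi * Complex.I / (k : ℂ)) *
        (1 + (1 + 4 * Complex.exp (-(Real.pi * Complex.I) / (k : ℂ))) ^ ((1 : ℂ) / 2)) →
      z' = 1 + (1 / 2) * Complex.exp (-(Real.pi * Complex.I) / (k : ℂ)) *
        (1 - (1 + 4 * Complex.exp (Real.pi * Complex.I / (k : ℂ))) ^ ((1 : ℂ) / 2)) →
      z' * (starRingEnd ℂ) z = 1 ∧ z' = 1 / (starRingEnd ℂ) z := by
  intro z z' hz hz'
  have hkR : (0:ℝ) < (k:ℝ) := by exact_mod_cast lt_of_lt_of_le (by norm_num) hk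
  have hk2 : (2:ℝ) ≤ (k:ℝ) := by exact_mod_cast hk
  set c : ℂ := Real.pi * Complex.I / (k : ℂ) with hc
  have hcc : -(Real.pi * Complex.I) / (k : ℂ) = -c := by rw [hc, neg_div]
  set a : ℂ := Complex.exp c with ha
  set b : ℂ := Complex.exp (-c) with hb
  have hab : a * b = 1 := by
    rw [ha, hb, ← Complex.exp_add]; simp
  have hcform : c = ((Real.pi / k : ℝ) : ℂ) * Complex.I := by
    rw [hc]; push_cast; ring
  have hncform : -c = ((-(Real.pi / k) : ℝ) : ℂ) * Complex.I := by
    rw [hcform]; push_cast; ring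
  have hconjc : (starRingEnd ℂ) c = -c := by
    rw [hcform]; simp [Complex.conj_I]
  have hconjnc : (starRingEnd ℂ) (-c) = c := by
    rw [map_neg, hconjc, neg_neg]
  have hconja : (starRingEnd ℂ) a = b := by
    rw [ha, hb, ← Complex.exp_conj, hconjc]
  have hconjb : (starRingEnd ℂ) b = a := by
    rw [ha, hb, ← Complex.exp_conj, hconjnc]
  have hcos : 0 ≤ Real.cos (Real.pi / k) := by
    apply Real.cos_nonneg_of_mem_Icc
    have hπ : 0 < Real.pi := Real.pi_pos
    constructor
    · have : 0 < Real.pi / k := div_pos hπ hkR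
      linarith
    · rw [div_le_div_iff₀ hkR (by norm_num)]
      nlinarith
  have hcosn : 0 ≤ Real.cos (-(Real.pi / k)) := by rwa [Real.cos_neg]
  set w : ℂ := 1 + 4 * b with hw
  set w' : ℂ := 1 + 4 * a with hw'
  have hwre : 0 < w.re := by
    rw [hw, hb, hncform]; exact aux_re_pos _ hcosn
  have hw're : 0 < w'.re := by
    rw [hw', ha, hcform]; exact aux_re_pos _ hcos
  have hconjw : (starRingEnd ℂ) w = w' := by
    rw [hw, hw', map_add, map_one, map_mul, hconjb, map_ofNat]
  have harg : w.arg ≠ Real.pi := by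
    rw [Ne, Complex.arg_eq_pi_iff]
    rintro ⟨h1, -⟩; linarith
  set s : ℂ := w ^ ((1:ℂ)/2) with hs
  set t : ℂ := w' ^ ((1:ℂ)/2) with ht
  have h12 : (starRingEnd ℂ) ((1:ℂ)/2) = (1:ℂ)/2 := by
    rw [map_div₀, map_one, map_ofNat]
  have hconjs : (starRingEnd ℂ) s = t := by
    rw [hs, ht, ← hconjw, Complex.conj_cpow w _ harg, h12]
  have hw'0 : w' ≠ 0 := by
    intro h; rw [h] at hw're; simp at hw're
  have ht2 : t * t = w' := by
    rw [ht, ← Complex.cpow_add _ _ hw'0]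
    norm_num
  have hconjz : (starRingEnd ℂ) z = 1 + (1/2) * b * (1 + t) := by
    rw [hz, hcc, ← hb, ← hw, ← hs]
    simp only [map_add, map_mul, map_one, map_div₀, map_ofNat, hconja, hconjs]
  have hz'2 : z' = 1 + (1/2) * b * (1 - t) := by
    rw [hz', hcc, ← hb]
  have key : z' * (starRingEnd ℂ) z = 1 := by
    rw [hz'2, hconjz]
    have hwdef : w' = 1 + 4 * a := hw'
    linear_combination (-(b^2)/4) * ht2 + (-(b^2)/4) * hwdef.symm + (-b) * hab
  refine ⟨key, ?_⟩
  have hzc0 : (starRingEnd ℂ) z ≠ 0 := by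
    intro h
    rw [h, mul_zero] at key
    exact zero_ne_one key
  field_simp
  linear_combination key
end

section
/- For every integer k ≥ 2, let z = 1 - (1/2)·exp(-iπ/k)·(1 + (1 - 4·exp(iπ/k))^(1/2)) (the Gies.3 root) and z' = 1 - (1/2)·exp(iπ/k)·(1 - (1 - 4·exp(-iπ/k))^(1/2)) (the Gies.4 root). Then z'·conj(z) = 1, i.e. z' = 1/conj(z). -/
open Complex Real

/-- The Gies.3 root (4.1) and the Gies.4 root (4.2) are related by the half-turn
symmetry of the ideal simplex: `z'·conj(z) = 1`, i.e. `z' = 1/conj(z)`. -/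
theorem gies3_gies4_half_turn (k : ℤ) (hk : 2 ≤ k) :
    ∀ z z' : ℂ,
      z = 1 - (1 / 2) * Complex.exp (-(Real.pi * Complex.I) / (k : ℂ)) *
        (1 + (1 - 4 * Complex.exp (Real.pi * Complex.I / (k : ℂ))) ^ ((1 : ℂ) / 2)) →
      z' = 1 - (1 / 2) * Complex.exp (Real.pi * Complex.I / (k : ℂ)) *
        (1 - (1 - 4 * Complex.exp (-(Real.pi * Complex.I) / (k : ℂ))) ^ ((1 : ℂ) / 2)) →
      z' * (starRingEnd ℂ) z = 1 ∧ z' = 1 / (starRingEnd ℂ) z := by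
  intro z z' hz hz'
  have hkR : (2 : ℝ) ≤ (k : ℝ) := by exact_mod_cast hk
  have hkRpos : (0 : ℝ) < (k : ℝ) := lt_of_lt_of_le two_pos hkR
  have hkC : (k : ℂ) ≠ 0 := by
    have : (k : ℂ) = ((k : ℝ) : ℂ) := by push_cast; ring
    rw [this]
    exact_mod_cast ne_of_gt hkRpos
  set θ : ℝ := Real.pi / (k : ℝ) with hθdef
  have hθpos : 0 < θ := div_pos Real.pi_pos hkRpos
  have hθlt : θ < Real.pi := by
    rw [hθdef, div_lt_iff₀ hkRpos]
    nlinarith [Real.pi_pos]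
  have hsin : 0 < Real.sin θ := Real.sin_pos_of_pos_of_lt_pi hθpos hθlt
  have harg : (Real.pi : ℂ) * Complex.I / (k : ℂ) = (θ : ℂ) * Complex.I := by
    rw [hθdef]; push_cast; field_simp
  have harg' : -((Real.pi : ℂ) * Complex.I) / (k : ℂ) = -(θ : ℂ) * Complex.I := by
    rw [hθdef]; push_cast; field_simp
  rw [harg, harg'] at hz hz'
  set u : ℂ := Complex.exp ((θ : ℂ) * Complex.I) with hu
  set v : ℂ := Complex.exp (-(θ : ℂ) * Complex.I) with hv
  have huv : u * v = 1 := by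
    rw [hu, hv, ← Complex.exp_add]
    simp
  have hcu : (starRingEnd ℂ) u = v := by
    rw [hu, hv, ← Complex.exp_conj]
    congr 1
    simp [Complex.conj_I]
  have hcv : (starRingEnd ℂ) v = u := by
    rw [hu, hv, ← Complex.exp_conj]
    congr 1
    simp [Complex.conj_I]
  have huIm : u.im = Real.sin θ := by
    rw [hu, Complex.exp_mul_I]
    simp [Complex.sin_ofReal_re]
  have hvIm : v.im = -Real.sin θ := by
    have : v = (starRingEnd ℂ) u := hcu.symm
    rw [this, Complex.conj_im, huIm]
  have hwarg : (1 - 4 * u).arg ≠ Real.pi := by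
    intro h
    have h2 := (Complex.arg_eq_pi_iff.mp h).2
    have : (1 - 4 * u).im = -4 * Real.sin θ := by simp [huIm]
    rw [this] at h2
    nlinarith
  have hw0' : (1 - 4 * v) ≠ 0 := by
    intro h
    have : (1 - 4 * v).im = 4 * Real.sin θ := by simp [hvIm]
    rw [h] at this
    simp at this
    nlinarith
  have key : (starRingEnd ℂ) ((1 - 4 * u) ^ ((1 : ℂ) / 2)) =
      (1 - 4 * v) ^ ((1 : ℂ) / 2) := by
    have h12 : (starRingEnd ℂ) ((1 : ℂ) / 2) = (1 : ℂ) / 2 := by simp [map_ofNat]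
    rw [← h12, ← Complex.conj_cpow _ _ hwarg]
    simp [hcu, map_ofNat]
  set t : ℂ := (1 - 4 * v) ^ ((1 : ℂ) / 2) with hts
  have ht2 : t * t = 1 - 4 * v := by
    rw [hts, ← Complex.cpow_add _ _ hw0']
    norm_num
  have hcz : (starRingEnd ℂ) z = 1 - 1 / 2 * u * (1 + t) := by
    rw [hz]
    simp only [map_sub, map_mul, map_add, map_one, map_div₀, Complex.conj_ofNat, key, hcv]
  have hmain : z' * (starRingEnd ℂ) z = 1 := by
    rw [hcz, hz']
    linear_combination u * huv - (u ^ 2 / 4) * ht2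
  refine ⟨hmain, ?_⟩
  rw [eq_div_iff]
  · exact hmain
  · intro h
    rw [h, mul_zero] at hmain
    exact zero_ne_one hmain
end

section
/- The sequence z(k) = 1 - (1/2)·exp(-iπ/k)·(1 + (1 - 4·exp(iπ/k))^(1/2)), indexed by positive integers k ≥ 2, converges to 1/2 + i·√3/2 as k → ∞. -/
/-!
The only delicate factor is the principal square root: `w k = 1 - 4 exp (iπ/k)` tends to `-3`,
which lies on the branch cut, but it does so from the lower half-plane
(`Im (w k) = -4 sin (π/k) < 0`), where the principal square root tends to `-i√3`.
The exponential factors tend to `1`, so the limit is `1 - (1 - i√3)/2`.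
-/

open Complex Filter Topology

theorem Complex.tendsto_cpow_const_nhdsWithin_im_neg_of_re_neg_of_im_zero {x : ℂ}
    (hre : x.re < 0) (him : x.im = 0) (y : ℂ) :
    Tendsto (· ^ y) (𝓝[{z : ℂ | z.im < 0}] x)
      (𝓝 (exp ((Real.log ‖x‖ - Real.pi * I) * y))) := by
  refine ((continuous_exp.tendsto _).comp
    ((tendsto_log_nhdsWithin_im_neg_of_re_neg_of_im_zero hre him).mul_const y)).congr' ?_
  filter_upwards [self_mem_nhdsWithin] with z (hz : z.im < 0)
  have hz0 : z ≠ 0 := fun h => by simp [h] at hz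
  simp [cpow_def_of_ne_zero hz0]

theorem Complex.exp_log_sub_pi_mul_I_div_two {r : ℝ} (hr : 0 < r) :
    exp ((Real.log r - Real.pi * I) * (1 / 2)) = -(√r * I) := by
  have hsqrt : √r = Real.exp (Real.log r * (1 / 2)) := by
    rw [Real.sqrt_eq_rpow, Real.rpow_def_of_pos hr]
  have hI : exp (Real.pi * I * (1 / 2)) = I := by
    rw [show (Real.pi : ℂ) * I * (1 / 2) = Real.pi / 2 * I by ring, exp_pi_div_two_mul_I]
  rw [sub_mul, exp_sub, hsqrt, hI, div_I]
  push_cast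
  ring

theorem Complex.tendsto_cpow_half_nhdsWithin_im_neg_neg {r : ℝ} (hr : 0 < r) :
    Tendsto (· ^ (1 / 2 : ℂ)) (𝓝[{z : ℂ | z.im < 0}] (-(r : ℂ))) (𝓝 (-(√r * I))) := by
  have := tendsto_cpow_const_nhdsWithin_im_neg_of_re_neg_of_im_zero
    (x := -r) (by simpa using hr) (by simp) (1 / 2)
  rwa [norm_neg, norm_real, Real.norm_of_nonneg hr.le, exp_log_sub_pi_mul_I_div_two hr] at this

theorem Complex.im_one_sub_mul_exp_mul_I_neg {c x : ℝ} (hc : 0 < c) (hx₀ : 0 < x)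
    (hxπ : x < Real.pi) : (1 - c * exp (x * I)).im < 0 := by
  have := Real.sin_pos_of_pos_of_lt_pi hx₀ hxπ
  simp only [sub_im, one_im, im_ofReal_mul, exp_ofReal_mul_I_im]
  nlinarith

theorem Complex.tendsto_exp_div_natCast_atTop (c : ℂ) :
    Tendsto (fun k : ℕ => exp (c / k)) atTop (𝓝 1) := by
  simpa [Function.comp_def] using
    (continuous_exp.tendsto 0).comp (tendsto_const_div_atTop_nhds_zero_nat c)

theorem tendsto_one_sub_four_mul_exp_pi_mul_I_div_natCast :
    Tendsto (fun k : ℕ => 1 - 4 * exp (Real.pi * I / k)) atTop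
      (𝓝[{z : ℂ | z.im < 0}] (-(3 : ℝ))) := by
  refine tendsto_nhdsWithin_iff.2 ⟨?_, ?_⟩
  · convert tendsto_const_nhds.sub ((tendsto_exp_div_natCast_atTop _).const_mul 4) using 2
    norm_num
  · filter_upwards [eventually_ge_atTop 2] with k (hk : 2 ≤ k)
    have hk' : (2 : ℝ) ≤ k := by exact_mod_cast hk
    have hπk : Real.pi / k < Real.pi := div_lt_self Real.pi_pos (by linarith)
    have := im_one_sub_mul_exp_mul_I_neg four_pos (by positivity) hπk
    simpa [div_mul_eq_mul_div] using this

open Complex Real Filter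

/-- The Gies.3 root series (4.1) converges to the regular ideal simplex
parameter `1/2 + i·√3/2` as `k → ∞`. -/
theorem gies3_root_tendsto (z : ℕ → ℂ)
    (hz : ∀ k : ℕ, 2 ≤ k →
      z k = 1 - (1 / 2) * Complex.exp (-(Real.pi * Complex.I) / (k : ℂ)) *
        (1 + (1 - 4 * Complex.exp (Real.pi * Complex.I / (k : ℂ))) ^ ((1 : ℂ) / 2))) :
    Tendsto z atTop (nhds (1 / 2 + Complex.I * (Real.sqrt 3 / 2 : ℝ))) := by
  have hsqrt := (tendsto_cpow_half_nhdsWithin_im_neg_neg three_pos).comp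
    tendsto_one_sub_four_mul_exp_pi_mul_I_div_natCast
  have hlim := tendsto_const_nhds (x := (1 : ℂ)).sub
    (((tendsto_exp_div_natCast_atTop (-(π * I))).const_mul (1 / 2)).mul
      (tendsto_const_nhds (x := (1 : ℂ)).add hsqrt))
  have hval : (1 : ℂ) - 1 / 2 * 1 * (1 + -(√3 * I)) = 1 / 2 + I * (√3 / 2 : ℝ) := by
    push_cast; ring
  rw [hval] at hlim
  refine hlim.congr' ?_
  filter_upwards [eventually_ge_atTop 2] with k hk
  exact (hz k hk).symm
end

section
/- Define the Lobachevsky function Λ(x) = -∫₀ˣ ln|2 sin t| dt for x ∈ ℝ. For each integer k ≥ 2, let z(k) = 1 + (1/2)·exp(iπ/k)·(1 + (1 + 4·exp(-iπ/k))^(1/2)), and let α₁(k) = arg z(k), α₂(k) = arg((z(k) - 1)/z(k)), α₃(k) = arg(1/(1 - z(k))). Then the volume V(k) = Λ(α₁(k)) + Λ(α₂(k)) + Λ(α₃(k)) tends to 0 as k → ∞. -/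
open Complex Real Filter

/-- The Lobachevsky function `Λ(x) = -∫₀ˣ ln|2 sin t| dt`. -/
noncomputable def lobachevsky (x : ℝ) : ℝ :=
  -∫ t in (0 : ℝ)..x, Real.log |2 * Real.sin t|

/-!
As `k → ∞` the root `z(k)` tends to `φ + 1 = φ²` (`φ` the golden ratio), a real number `> 1`.
Hence `z`, `(z - 1) / z` and `1 / (z - 1)` all tend to positive reals, whose arguments are `0`,
and `Λ` is continuous with `Λ 0 = 0`. The third angle is `arg (1 / (1 - z)) = arg (-(1 / (z - 1)))`,
which differs from `arg (1 / (z - 1))` by `±π`; this is harmless because `Λ` is `π`-periodic,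
which is the classical identity `∫₀^π log (2 sin t) dt = 0`.
-/

open MeasureTheory intervalIntegral Function Topology

lemma log_abs_two_mul_sin_ae_eq :
    (fun t => Real.log |2 * Real.sin t|) =ᵐ[volume]
      fun t => Real.log 2 + Real.log (Real.sin t) := by
  have hzeros : {t : ℝ | Real.sin t = 0}.Countable := by
    have : {t : ℝ | Real.sin t = 0} = Set.range (fun n : ℤ => n * π) := by
      ext; simp [Real.sin_eq_zero_iff]
    rw [this]
    exact Set.countable_range _
  filter_upwards [hzeros.ae_notMem volume] with t ht
  rw [log_abs, log_mul two_ne_zero ht]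

lemma intervalIntegrable_log_abs_two_mul_sin (a b : ℝ) :
    IntervalIntegrable (fun t => Real.log |2 * Real.sin t|) volume a b :=
  (intervalIntegrable_const.add intervalIntegrable_log_sin).congr_ae
    (ae_restrict_of_ae log_abs_two_mul_sin_ae_eq.symm)

lemma integral_log_abs_two_mul_sin_zero_pi : ∫ t in 0..π, Real.log |2 * Real.sin t| = 0 := by
  rw [integral_congr_ae (log_abs_two_mul_sin_ae_eq.mono fun t ht _ => ht),
    integral_add (g := fun t => Real.log (Real.sin t)) intervalIntegrable_const
      intervalIntegrable_log_sin, intervalIntegral.integral_const, integral_log_sin_zero_pi]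
  simp only [sub_zero, smul_eq_mul]
  ring

lemma continuous_lobachevsky : Continuous lobachevsky :=
  (continuous_primitive intervalIntegrable_log_abs_two_mul_sin 0).neg

@[simp]
lemma lobachevsky_zero : lobachevsky 0 = 0 := by
  simp [lobachevsky]

lemma lobachevsky_periodic : Periodic lobachevsky π := by
  intro x
  have hper : Periodic (fun t => Real.log |2 * Real.sin t|) π := fun t => by
    simp [Real.sin_add_pi]
  rw [lobachevsky, lobachevsky, ← integral_add_adjacent_intervals
    (intervalIntegrable_log_abs_two_mul_sin 0 x) (intervalIntegrable_log_abs_two_mul_sin x _),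
    hper.intervalIntegral_add_eq x 0, zero_add, integral_log_abs_two_mul_sin_zero_pi, add_zero]

theorem Function.Periodic.comp_arg_neg {α : Type*} {f : ℝ → α} (hf : Periodic f π) (x : ℂ) :
    f (arg (-x)) = f (arg x) := by
  rcases eq_or_ne x 0 with rfl | hx
  · simp
  obtain ⟨k, hk⟩ := Real.Angle.angle_eq_iff_two_pi_dvd_sub.1
    ((arg_neg_coe_angle hx).trans (Real.Angle.coe_add _ _).symm)
  rw [show arg (-x) = arg x + ((2 * k + 1 : ℤ) : ℝ) * π by push_cast; linarith,
    hf.int_mul _ (arg x)]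

lemma tendsto_lobachevsky_arg {ι : Type*} {l : Filter ι} {w : ι → ℂ} {a : ℝ} (ha : 0 < a)
    (hw : Tendsto w l (𝓝 a)) : Tendsto (fun i => lobachevsky (arg (w i))) l (𝓝 0) := by
  have harg : Tendsto (fun i => arg (w i)) l (𝓝 0) := by
    have := (continuousAt_arg (ofReal_mem_slitPlane.2 ha)).tendsto.comp hw
    rwa [arg_ofReal_of_nonneg ha.le] at this
  exact (continuous_lobachevsky.tendsto' 0 0 lobachevsky_zero).comp harg

lemma tendsto_exp_div_natCast (c : ℂ) : Tendsto (fun k : ℕ => cexp (c / k)) atTop (𝓝 1) :=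
  (Complex.continuous_exp.tendsto' 0 1 exp_zero).comp (tendsto_const_div_atTop_nhds_zero_nat c)

lemma ofReal_cpow_one_div_two {x : ℝ} (hx : 0 ≤ x) : (x : ℂ) ^ ((1 : ℂ) / 2) = (√x : ℝ) := by
  rw [sqrt_eq_rpow, ofReal_cpow hx]
  norm_num

lemma tendsto_gies1_root :
    Tendsto (fun k : ℕ => 1 + (1 / 2) * cexp (π * I / k) *
      (1 + (1 + 4 * cexp (-(π * I) / k)) ^ ((1 : ℂ) / 2))) atTop (𝓝 (goldenRatio + 1 : ℝ)) := by
  have hsqrt : Tendsto (fun k : ℕ => (1 + 4 * cexp (-(π * I) / k)) ^ ((1 : ℂ) / 2)) atTop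
      (𝓝 (√5 : ℝ)) := by
    rw [← ofReal_cpow_one_div_two (by norm_num)]
    refine (continuousAt_cpow_const (ofReal_mem_slitPlane.2 (by norm_num))).tendsto.comp ?_
    convert ((tendsto_exp_div_natCast (-(π * I))).const_mul 4).const_add 1 using 2
    norm_num
  convert ((tendsto_exp_div_natCast (π * I)).const_mul (1 / 2)).mul (hsqrt.const_add 1)
    |>.const_add 1 using 2
  rw [goldenRatio]
  push_cast
  ring

/-- Theorem 5.1 (volume claim): the volumes
`V(k) = Λ(α₁(k)) + Λ(α₂(k)) + Λ(α₃(k))` of the Gies.1 simplices (root series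
(2.10)) tend to `0` as `k → ∞`. -/
theorem gies1_volume_tendsto_zero (z : ℕ → ℂ)
    (hz : ∀ k : ℕ, 2 ≤ k →
      z k = 1 + (1 / 2) * Complex.exp (Real.pi * Complex.I / (k : ℂ)) *
        (1 + (1 + 4 * Complex.exp (-(Real.pi * Complex.I) / (k : ℂ))) ^ ((1 : ℂ) / 2))) :
    Tendsto (fun k : ℕ =>
        lobachevsky (Complex.arg (z k)) +
        lobachevsky (Complex.arg ((z k - 1) / z k)) +
        lobachevsky (Complex.arg (1 / (1 - z k))))
      atTop (nhds 0) := by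
  obtain ⟨r, hr, hz_lim⟩ : ∃ r : ℝ, 1 < r ∧ Tendsto z atTop (𝓝 r) :=
    ⟨_, lt_add_of_pos_left 1 goldenRatio_pos,
      tendsto_gies1_root.congr' ((eventually_ge_atTop 2).mono fun k hk => (hz k hk).symm)⟩
  have hr₁ : 0 < r - 1 := sub_pos.2 hr
  have hα₂ : Tendsto (fun k => (z k - 1) / z k) atTop (𝓝 ((r - 1) / r : ℝ)) := by
    push_cast
    exact (hz_lim.sub_const 1).div hz_lim (ofReal_ne_zero.2 (by positivity))
  have hα₃ : Tendsto (fun k => 1 / (z k - 1)) atTop (𝓝 (1 / (r - 1) : ℝ)) := by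
    push_cast
    exact tendsto_const_nhds.div (hz_lim.sub_const 1) (by exact_mod_cast hr₁.ne')
  have hΛα₃ (k : ℕ) : lobachevsky (arg (1 / (1 - z k))) = lobachevsky (arg (1 / (z k - 1))) := by
    rw [← lobachevsky_periodic.comp_arg_neg, ← one_div_neg_eq_neg_one_div, neg_sub]
  simpa only [hΛα₃, add_zero] using ((tendsto_lobachevsky_arg (by linarith) hz_lim).add
    (tendsto_lobachevsky_arg (by positivity) hα₂)).add (tendsto_lobachevsky_arg (by positivity) hα₃)
end

section
/- Let G be a group and let a, b ∈ G satisfy a²b² = ba (equivalently, the relator a·a·b·b·a⁻¹·b⁻¹ is trivial). Then the elements w = b²·a·b·a⁻¹·b⁻² and p = a² satisfy w·w·p = 1. -/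
/-- In any group with relation `a²b² = ba` (the Gieseking cycle relation),
the elements `w = b²·a·b·a⁻¹·b⁻²` and `p = a²` satisfy `w·w·p = 1`
(the relation `z₂*z₂*p = 1` of presentation (2.14) via (2.16)). -/
theorem gieseking_presentation_relation {G : Type*} [Group G] (a b : G)
    (h : a ^ 2 * b ^ 2 = b * a) :
    (b ^ 2 * a * b * a⁻¹ * (b ^ 2)⁻¹) * (b ^ 2 * a * b * a⁻¹ * (b ^ 2)⁻¹) * a ^ 2 = 1 := by
  have h1 : a * b ^ 2 = a⁻¹ * b * a := by
    have := congrArg (fun x => a⁻¹ * x) h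
    simpa [mul_assoc, pow_succ] using this
  have h2 : (b ^ 2)⁻¹ * a ^ 2 = b⁻¹ * a * (b ^ 2)⁻¹ := by
    have := congrArg (fun x => (b ^ 2)⁻¹ * x * (b ^ 2)⁻¹) h
    simpa [mul_assoc, pow_succ] using this
  calc (b ^ 2 * a * b * a⁻¹ * (b ^ 2)⁻¹) * (b ^ 2 * a * b * a⁻¹ * (b ^ 2)⁻¹) * a ^ 2
      = b ^ 2 * (a * b ^ 2) * a⁻¹ * ((b ^ 2)⁻¹ * a ^ 2) := by simp only [pow_two]; group
    _ = b ^ 2 * (a⁻¹ * b * a) * a⁻¹ * (b⁻¹ * a * (b ^ 2)⁻¹) := by rw [h1, h2]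
    _ = 1 := by group
end
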